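/- Let G be an abelian group and g₁, g₂ : ℝⁿ → G (n ≥ 2) two orthogonally additive functions (gᵢ(x+y) = gᵢ(x) + gᵢ(y) whenever ⟨x,y⟩ = 0). If g₁ and g₂ agree outside a set of Lebesgue measure zero in ℝⁿ, then g₁ = g₂. -/

import Mathlib

/-!
The even part `x ↦ f x + f (-x)` of an orthogonally additive `f` is radial, because `‖p‖ = ‖q‖`
forces `p + q ⊥ p - q`. To see that it vanishes at `x` when `f` vanishes almost everywhere, write
`x`, up to a rotation, as `z + w` with `z ⊥ w`, `z` a generic point of the punctured ball of radius
`‖x‖` and `‖w‖ = √(‖x‖² - ‖z‖²)`. The radius change `radialComplement` is a differentiable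
involution of that ball, so it maps null sets to null sets, and for generic `z` both `z` and its
image avoid the exceptional set.

Hence `f` is odd, and an odd orthogonally additive map is additive once `dim ≥ 2`: along a line,
`(a + b) • x = (a • x + c • w) + (b • x - c • w)` with `c² = a b`, `w ⊥ x` and `‖w‖ = ‖x‖`; in
general, split `y` along `x` and `xᗮ`. Finally, an additive map vanishing almost everywhere
vanishes, since `f x = f (x + t) - f t` for generic `t`.
-/

open MeasureTheory Module
open scoped RealInnerProductSpace

lemma AddMonoidHom.eq_zero_of_ae_eq_zero {A G : Type*} [AddGroup A] [AddCommGroup G]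
    [MeasurableSpace A] [MeasurableAdd A] (μ : Measure A) [μ.IsAddLeftInvariant] [NeZero μ]
    (φ : A →+ G) (hφ : ⇑φ =ᵐ[μ] 0) : φ = 0 := by
  ext x
  have hshift : ∀ᵐ t ∂μ, φ (x + t) = 0 :=
    (measurePreserving_add_left μ x).quasiMeasurePreserving.ae hφ
  obtain ⟨t, ht, hxt⟩ := (hφ.and hshift).exists
  have ht' : φ t = 0 := ht
  simpa [ht'] using hxt

section

variable {E : Type*} [NormedAddCommGroup E] [InnerProductSpace ℝ E] {G : Type*} [AddCommGroup G]

def OrthogonallyAdditive (f : E → G) : Prop :=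
  ∀ x y : E, ⟪x, y⟫ = 0 → f (x + y) = f x + f y

lemma exists_inner_eq_zero_norm_eq [FiniteDimensional ℝ E] (hE : 2 ≤ finrank ℝ E) (x : E)
    {r : ℝ} (hr : 0 ≤ r) : ∃ w : E, ⟪x, w⟫ = 0 ∧ ‖w‖ = r := by
  have hK : (ℝ ∙ x)ᗮ ≠ ⊥ := fun h => by
    have hsum := Submodule.finrank_add_finrank_orthogonal (ℝ ∙ x)
    have hspan : finrank ℝ (ℝ ∙ x) ≤ 1 := by simpa using finrank_span_le_card ({x} : Set E)
    rw [h, finrank_bot] at hsum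
    omega
  obtain ⟨w, hw, hw0⟩ := Submodule.exists_mem_ne_zero_of_ne_bot hK
  refine ⟨(r / ‖w‖) • w, ?_, ?_⟩
  · rw [real_inner_smul_right, Submodule.mem_orthogonal_singleton_iff_inner_right.1 hw, mul_zero]
  · rw [norm_smul, Real.norm_of_nonneg (by positivity),
      div_mul_cancel₀ _ (norm_ne_zero_iff.mpr hw0)]

lemma map_add_of_odd_of_mul_nonneg {g : ℝ → G} (hodd : ∀ a, g (-a) = -g a)
    (hadd : ∀ a b, 0 ≤ a * b → g (a + b) = g a + g b) (a b : ℝ) : g (a + b) = g a + g b := by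
  rcases le_total 0 (a * b) with hab | hab
  · exact hadd a b hab
  wlog hb : (a + b) * b ≤ 0 generalizing a b
  · rw [add_comm a, add_comm (g a)]
    exact this b a (by linarith) (by nlinarith)
  have := hadd (a + b) (-b) (by linarith)
  rw [add_neg_cancel_right, hodd] at this
  rw [this]; abel

namespace OrthogonallyAdditive

variable {f g : E → G}

lemma map_zero (hf : OrthogonallyAdditive f) : f 0 = 0 := by
  simpa using hf 0 0 (inner_zero_left 0)

lemma sub (hf : OrthogonallyAdditive f) (hg : OrthogonallyAdditive g) :
    OrthogonallyAdditive (f - g) := fun x y hxy => by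
  simp only [Pi.sub_apply, hf x y hxy, hg x y hxy]; abel

lemma add_comp_neg (hf : OrthogonallyAdditive f) :
    OrthogonallyAdditive (fun x => f x + f (-x)) := fun x y hxy => by
  simp only [neg_add, hf x y hxy, hf (-x) (-y) (by rw [inner_neg_neg, hxy])]; abel

lemma map_eq_of_norm_eq_of_even (hf : OrthogonallyAdditive f) (heven : ∀ x, f (-x) = f x)
    {u v : E} (huv : ‖u‖ = ‖v‖) : f u = f v := by
  have thales : ∀ p q : E, ‖p‖ = ‖q‖ → f (p + p) = f (p + q) + f (p - q) := fun p q hpq => by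
    rw [← hf _ _ ((real_inner_add_sub_eq_zero_iff p q).2 hpq), add_add_sub_cancel]
  set p := (2⁻¹ : ℝ) • u
  set q := (2⁻¹ : ℝ) • v
  have hpq : ‖p‖ = ‖q‖ := by simp only [p, q, norm_smul, huv]
  calc f u = f (p + q) + f (p - q) := by
        rw [← thales p q hpq, ← two_smul ℝ p, smul_inv_smul₀ two_ne_zero]
    _ = f (q + p) + f (q - p) := by rw [add_comm p, ← neg_sub q p, heven]
    _ = f v := by rw [← thales q p hpq.symm, ← two_smul ℝ q, smul_inv_smul₀ two_ne_zero]

lemma map_smul_add_smul_of_mul_nonneg [FiniteDimensional ℝ E] (hE : 2 ≤ finrank ℝ E)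
    (hf : OrthogonallyAdditive f) (hodd : ∀ x, f (-x) = -f x) (x : E) {a b : ℝ} (hab : 0 ≤ a * b) :
    f ((a + b) • x) = f (a • x) + f (b • x) := by
  obtain ⟨w, hxw, hw⟩ := exists_inner_eq_zero_norm_eq hE x (norm_nonneg x)
  set c := √(a * b)
  have hc : c ^ 2 = a * b := Real.sq_sqrt hab
  have huv : ⟪a • x + c • w, b • x - c • w⟫ = 0 := by
    simp only [inner_add_left, inner_sub_right, real_inner_smul_left, real_inner_smul_right, hxw,
      real_inner_comm x w]
    rw [real_inner_self_eq_norm_sq, real_inner_self_eq_norm_sq, hw]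
    linear_combination (-‖x‖ ^ 2) * hc
  have hu := hf (a • x) (c • w) (by rw [real_inner_smul_left, real_inner_smul_right, hxw]; ring)
  have hv := hf (b • x) (-(c • w)) (by
    rw [inner_neg_right, real_inner_smul_left, real_inner_smul_right, hxw]; ring)
  calc f ((a + b) • x) = f (a • x + c • w) + f (b • x - c • w) := by
        rw [← hf _ _ huv, add_smul]; congr 1; abel
    _ = f (a • x) + f (b • x) := by rw [sub_eq_add_neg, hu, hv, hodd]; abel

lemma map_add_of_odd [FiniteDimensional ℝ E] (hE : 2 ≤ finrank ℝ E)
    (hf : OrthogonallyAdditive f) (hodd : ∀ x, f (-x) = -f x) (x y : E) :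
    f (x + y) = f x + f y := by
  have hline : ∀ a b : ℝ, f ((a + b) • x) = f (a • x) + f (b • x) :=
    map_add_of_odd_of_mul_nonneg (g := fun t => f (t • x)) (fun a => by rw [neg_smul, hodd])
      fun a b => hf.map_smul_add_smul_of_mul_nonneg hE hodd x
  obtain ⟨α, z, hxz, rfl⟩ : ∃ (α : ℝ) (z : E), ⟪x, z⟫ = 0 ∧ y = α • x + z := by
    obtain ⟨α, hα⟩ := Submodule.mem_span_singleton.1 ((ℝ ∙ x).starProjection_apply_mem y)
    exact ⟨α, _, Submodule.mem_orthogonal_singleton_iff_inner_right.1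
      ((ℝ ∙ x).sub_starProjection_mem_orthogonal y), by rw [hα, add_sub_cancel]⟩
  have hαx : ∀ β : ℝ, ⟪β • x, z⟫ = 0 := fun β => by rw [real_inner_smul_left, hxz, mul_zero]
  calc f (x + (α • x + z)) = f ((1 + α) • x + z) := by rw [add_smul, one_smul, add_assoc]
    _ = f x + f (α • x + z) := by rw [hf _ _ (hαx _), hline, one_smul, hf _ _ (hαx _), add_assoc]

end OrthogonallyAdditive

noncomputable def radialComplement (s : ℝ) (z : E) : E := (√(s - ‖z‖ ^ 2) / ‖z‖) • z

lemma norm_radialComplement {s : ℝ} {z : E} (hz : z ≠ 0) :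
    ‖radialComplement s z‖ = √(s - ‖z‖ ^ 2) := by
  rw [radialComplement, norm_smul, Real.norm_of_nonneg (by positivity),
    div_mul_cancel₀ _ (norm_ne_zero_iff.2 hz)]

lemma radialComplement_mem {s : ℝ} {z : E} (hz : z ∈ {z : E | z ≠ 0 ∧ ‖z‖ ^ 2 < s}) :
    radialComplement s z ∈ {z : E | z ≠ 0 ∧ ‖z‖ ^ 2 < s} := by
  obtain ⟨hz0, hzs⟩ := hz
  have hpos : 0 < ‖z‖ ^ 2 := by positivity
  refine ⟨fun h => ?_, ?_⟩
  · have := norm_radialComplement (s := s) hz0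
    rw [h, norm_zero, eq_comm, Real.sqrt_eq_zero'] at this
    linarith
  · rw [norm_radialComplement hz0, Real.sq_sqrt (by linarith)]
    linarith

lemma radialComplement_radialComplement {s : ℝ} {z : E} (hz : z ≠ 0) (hzs : ‖z‖ ^ 2 < s) :
    radialComplement s (radialComplement s z) = z := by
  have hr : 0 < √(s - ‖z‖ ^ 2) := Real.sqrt_pos.2 (by linarith)
  have hnz : 0 < ‖z‖ := norm_pos_iff.2 hz
  rw [radialComplement, norm_radialComplement hz, Real.sq_sqrt (by linarith), sub_sub_cancel,
    Real.sqrt_sq hnz.le, radialComplement, smul_smul, div_mul_div_cancel₀ hr.ne',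
    div_self hnz.ne', one_smul]

lemma differentiableOn_radialComplement (s : ℝ) :
    DifferentiableOn ℝ (radialComplement s) {z : E | z ≠ 0 ∧ ‖z‖ ^ 2 < s} := by
  rintro z ⟨hz, hzs⟩
  have hnorm : DifferentiableAt ℝ (fun y : E => ‖y‖) z :=
    (contDiffAt_norm ℝ hz).differentiableAt one_ne_zero
  refine DifferentiableAt.differentiableWithinAt ?_
  unfold radialComplement
  fun_prop (disch := first | exact norm_ne_zero_iff.2 hz | exact (sub_pos.2 hzs).ne')

variable [FiniteDimensional ℝ E] [MeasurableSpace E] [BorelSpace E] (μ : Measure E)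
  [μ.IsAddHaarMeasure]

lemma exists_notMem_radialComplement_notMem [Nontrivial E] {N : Set E} (hN : μ N = 0)
    {s : ℝ} (hs : 0 < s) :
    ∃ z : E, z ≠ 0 ∧ ‖z‖ ^ 2 < s ∧ z ∉ N ∧ radialComplement s z ∉ N := by
  set U := {z : E | z ≠ 0 ∧ ‖z‖ ^ 2 < s}
  have hU : IsOpen U := isOpen_ne.inter (isOpen_lt (continuous_norm.pow 2) continuous_const)
  have hU0 : U.Nonempty := by
    obtain ⟨z, hz⟩ := exists_norm_eq E (half_pos (Real.sqrt_pos.2 hs)).le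
    refine ⟨z, norm_ne_zero_iff.1 ?_, ?_⟩ <;> rw [hz]
    · positivity
    · nlinarith [Real.sq_sqrt hs.le, Real.sqrt_pos.2 hs]
  have himage : μ (radialComplement s '' (N ∩ U)) = 0 :=
    addHaar_image_eq_zero_of_differentiableOn_of_addHaar_eq_zero μ
      ((differentiableOn_radialComplement s).mono Set.inter_subset_right)
      (measure_mono_null Set.inter_subset_left hN)
  obtain ⟨z, hzU, hzN⟩ : (U \ (N ∪ radialComplement s '' (N ∩ U))).Nonempty :=
    nonempty_of_measure_ne_zero <| by
      rw [measure_sdiff_null (measure_union_null hN himage)]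
      exact hU.measure_ne_zero μ hU0
  exact ⟨z, hzU.1, hzU.2, fun h => hzN (Or.inl h), fun h => hzN (Or.inr
    ⟨_, ⟨h, radialComplement_mem hzU⟩, radialComplement_radialComplement hzU.1 hzU.2⟩)⟩

namespace OrthogonallyAdditive

variable {f : E → G}

lemma eq_zero_of_even_of_ae_eq_zero (hE : 2 ≤ finrank ℝ E) (hf : OrthogonallyAdditive f)
    (heven : ∀ x, f (-x) = f x) (hae : f =ᵐ[μ] 0) : f = 0 := by
  funext x
  rcases eq_or_ne x 0 with rfl | hx
  · exact hf.map_zero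
  have : Nontrivial E := nontrivial_of_ne x 0 hx
  obtain ⟨z, hz, hzs, hzN, hwN⟩ := exists_notMem_radialComplement_notMem μ
    (N := {z | f z ≠ 0}) (by simpa using ae_iff.1 hae) (by positivity : 0 < ‖x‖ ^ 2)
  obtain ⟨w, hzw, hw⟩ := exists_inner_eq_zero_norm_eq hE z (norm_nonneg (radialComplement _ z))
  have hfz : f z = 0 := not_not.1 hzN
  have hfw : f w = 0 := (hf.map_eq_of_norm_eq_of_even heven hw).trans (not_not.1 hwN)
  have hnorm : ‖z + w‖ = ‖x‖ := by
    rw [← sq_eq_sq₀ (norm_nonneg _) (norm_nonneg _), norm_add_sq_real, hzw, mul_zero, add_zero,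
      hw, norm_radialComplement hz, Real.sq_sqrt (by linarith)]
    ring
  rw [Pi.zero_apply, ← hf.map_eq_of_norm_eq_of_even heven hnorm, hf z w hzw, hfz, hfw, add_zero]

theorem eq_zero_of_ae_eq_zero (hE : 2 ≤ finrank ℝ E) (hf : OrthogonallyAdditive f)
    (hae : f =ᵐ[μ] 0) : f = 0 := by
  have hsym : (fun x => f x + f (-x)) = 0 := by
    refine hf.add_comp_neg.eq_zero_of_even_of_ae_eq_zero μ hE
      (fun x => by rw [neg_neg, add_comm]) ?_
    filter_upwards [hae, (quasiMeasurePreserving_neg μ).ae hae] with x hx hnx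
    simp only [Pi.zero_apply] at *
    rw [hx, hnx, add_zero]
  have hodd : ∀ x, f (-x) = -f x := fun x => eq_neg_of_add_eq_zero_right (congrFun hsym x)
  exact congrArg DFunLike.coe
    ((AddMonoidHom.mk' f (hf.map_add_of_odd hE hodd)).eq_zero_of_ae_eq_zero μ hae)

end OrthogonallyAdditive

end

theorem orthogonally_additive_unique (n : ℕ) (hn : 2 ≤ n)
    {G : Type*} [AddCommGroup G]
    (g₁ g₂ : EuclideanSpace ℝ (Fin n) → G)
    (h₁ : ∀ x y : EuclideanSpace ℝ (Fin n), ⟪x, y⟫ = 0 → g₁ (x + y) = g₁ x + g₁ y)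
    (h₂ : ∀ x y : EuclideanSpace ℝ (Fin n), ⟪x, y⟫ = 0 → g₂ (x + y) = g₂ x + g₂ y)
    (hae : ∀ᵐ x ∂(volume : Measure (EuclideanSpace ℝ (Fin n))), g₁ x = g₂ x) :
    g₁ = g₂ := by
  have hE : 2 ≤ finrank ℝ (EuclideanSpace ℝ (Fin n)) := by rwa [finrank_euclideanSpace_fin]
  have hf : OrthogonallyAdditive (g₁ - g₂) := OrthogonallyAdditive.sub h₁ h₂
  exact sub_eq_zero.1 (hf.eq_zero_of_ae_eq_zero volume hE (hae.mono fun x hx => sub_eq_zero.2 hx))
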